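/- Let P, P̃ be probability measures on Ξ = Ξ₁×…×Ξ_T with coordinate filtration (F_t), and for each t let π_t(·×· | x_{1:t−1}, y_{1:t−1}) be kernels on Ξ_t×Ξ_t whose marginals are the disintegration kernels P_t(·|x_{1:t−1}) and P̃_t(·|y_{1:t−1}). Let π be the measure on Ξ×Ξ obtained by composing these kernels. Then the conditional marginals of π satisfy π(A×Ξ | x_{1:t}, y_{1:t}) = P(A | x_{1:t}) and π(Ξ×B | x_{1:t}, y_{1:t}) = P̃(B | y_{1:t}) for all measurable A, B and all t ∈ {0,…,T−1}. -/

import Mathlib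

/-!
Induction on the number `T - t` of remaining stages. Pushing `π(· | x_{1:t}, y_{1:t})` forward
by `Prod.fst` commutes with the bind over `ρ_t`; by induction the inner measures become
`P(· | x_{1:t+1})`, which only see the first component of the stage-`t` pair, so the bind
factors through the first marginal of `ρ_t`, which is `P_t(· | x_{1:t})`. Interchanging bind and
pushforward needs the conditional measures to be measurable in the conditioning variable; this
holds because each stage only adds an s-finite kernel.
-/

open MeasureTheory ProbabilityTheory

/-- The conditional measure `P(· | x_{1:t})` of the process measure built from the
disintegration kernels `K`: coordinates `< t` are frozen at `x` and the future coordinates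
are obtained by composing the kernels stage by stage. -/
noncomputable def composeFrom {T : ℕ} {Ξ : Fin T → Type*} [∀ t, MeasurableSpace (Ξ t)]
    (K : ∀ t : Fin T, (∀ s, Ξ s) → Measure (Ξ t)) (t : ℕ) (x : ∀ s, Ξ s) :
    Measure (∀ s, Ξ s) :=
  if h : t < T then
    (K ⟨t, h⟩ x).bind (fun u => composeFrom K (t + 1) (Function.update x ⟨t, h⟩ u))
  else Measure.dirac x
  termination_by T - t

/-- The composed bivariate measure `π(· | x_{1:t}, y_{1:t})` on `Ξ × Ξ`, obtained by
composing the stagewise bivariate kernels `ρ_t`. -/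
noncomputable def composePair {T : ℕ} {Ξ : Fin T → Type*} [∀ t, MeasurableSpace (Ξ t)]
    (ρ : ∀ t : Fin T, ((∀ s, Ξ s) × (∀ s, Ξ s)) → Measure (Ξ t × Ξ t))
    (t : ℕ) (p : (∀ s, Ξ s) × (∀ s, Ξ s)) : Measure ((∀ s, Ξ s) × (∀ s, Ξ s)) :=
  if h : t < T then
    (ρ ⟨t, h⟩ p).bind (fun uv =>
      composePair ρ (t + 1)
        (Function.update p.1 ⟨t, h⟩ uv.1, Function.update p.2 ⟨t, h⟩ uv.2))
  else Measure.dirac p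
  termination_by T - t

namespace MeasureTheory.Measure

variable {α β γ δ : Type*} [MeasurableSpace α] [MeasurableSpace β] [MeasurableSpace γ]
  [MeasurableSpace δ]

lemma map_bind (m : Measure α) {f : α → Measure β} (hf : Measurable f) {g : β → γ}
    (hg : Measurable g) : (m.bind f).map g = m.bind fun a => (f a).map g := by
  simp_rw [← bind_dirac_eq_map _ hg]
  exact bind_bind hf.aemeasurable (measurable_dirac.comp hg).aemeasurable

lemma bind_map (m : Measure α) {g : α → β} (hg : Measurable g) {f : β → Measure γ}
    (hf : Measurable f) : (m.map g).bind f = m.bind fun a => f (g a) := by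
  rw [← bind_dirac_eq_map _ hg,
    bind_bind (f := fun a => dirac (g a)) (measurable_dirac.comp hg).aemeasurable hf.aemeasurable]
  simp_rw [dirac_bind hf]

lemma map_bind_eq_bind_map_of_map_eq (m : Measure α) {G : α → Measure γ} (hG : Measurable G)
    {H : β → Measure δ} (hH : Measurable H) {g : γ → δ} (hg : Measurable g) {q : α → β}
    (hq : Measurable q) (hGH : ∀ a, (G a).map g = H (q a)) :
    (m.bind G).map g = (m.map q).bind H := by
  rw [map_bind m hG hg, bind_map m hq hH]
  simp_rw [hGH]

end MeasureTheory.Measure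

namespace ProbabilityTheory.Kernel

variable {α β γ δ : Type*} [MeasurableSpace α] [MeasurableSpace β] [MeasurableSpace γ]
  [MeasurableSpace δ]

lemma measurable_map_uncurry (κ : Kernel α β) [IsSFiniteKernel κ] {f : α → β → γ}
    (hf : Measurable (Function.uncurry f)) : Measurable fun a => (κ a).map (f a) := by
  refine Measure.measurable_of_measurable_coe _ fun s hs => ?_
  have hsection : ∀ a, (κ a).map (f a) s = κ a (Prod.mk a ⁻¹' (Function.uncurry f ⁻¹' s)) :=
    fun a => Measure.map_apply (hf.comp measurable_prodMk_left) hs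
  simp_rw [hsection]
  exact measurable_kernel_prodMk_left (hf hs)

lemma measurable_bind_uncurry (κ : Kernel α β) [IsSFiniteKernel κ] {f : α → β → γ}
    (hf : Measurable (Function.uncurry f)) {ν : γ → Measure δ} (hν : Measurable ν) :
    Measurable fun a => (κ a).bind fun b => ν (f a b) := by
  have hbind : ∀ a, (κ a).bind (fun b => ν (f a b)) = ((κ a).map (f a)).bind ν :=
    fun a => (Measure.bind_map _ (hf.comp measurable_prodMk_left) hν).symm
  simp_rw [hbind]
  exact (Measure.measurable_bind' hν).comp (κ.measurable_map_uncurry hf)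

end ProbabilityTheory.Kernel

section Composition

variable {T : ℕ} {Ξ : Fin T → Type*} [∀ t, MeasurableSpace (Ξ t)]
  {K : ∀ t : Fin T, (∀ s, Ξ s) → Measure (Ξ t)}
  {ρ : ∀ t : Fin T, ((∀ s, Ξ s) × (∀ s, Ξ s)) → Measure (Ξ t × Ξ t)} {t : ℕ}

lemma composeFrom_of_lt (h : t < T) (x : ∀ s, Ξ s) :
    composeFrom K t x =
      (K ⟨t, h⟩ x).bind fun u => composeFrom K (t + 1) (Function.update x ⟨t, h⟩ u) := by
  rw [composeFrom, dif_pos h]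

lemma composeFrom_of_not_lt (h : ¬t < T) (x : ∀ s, Ξ s) : composeFrom K t x = .dirac x := by
  rw [composeFrom, dif_neg h]

lemma composePair_of_lt (h : t < T) (p : (∀ s, Ξ s) × (∀ s, Ξ s)) :
    composePair ρ t p = (ρ ⟨t, h⟩ p).bind fun uv => composePair ρ (t + 1)
      (Function.update p.1 ⟨t, h⟩ uv.1, Function.update p.2 ⟨t, h⟩ uv.2) := by
  rw [composePair, dif_pos h]

lemma composePair_of_not_lt (h : ¬t < T) (p : (∀ s, Ξ s) × (∀ s, Ξ s)) :
    composePair ρ t p = .dirac p := by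
  rw [composePair, dif_neg h]

theorem measurable_composeFrom (hK : ∀ t x, IsProbabilityMeasure (K t x))
    (hKm : ∀ t, Measurable (K t)) (t : ℕ) : Measurable (composeFrom K t) := by
  by_cases h : t < T
  · have : IsMarkovKernel (⟨K ⟨t, h⟩, hKm _⟩ : Kernel _ _) := ⟨hK _⟩
    rw [funext (composeFrom_of_lt h)]
    exact Kernel.measurable_bind_uncurry ⟨K ⟨t, h⟩, hKm _⟩ (by fun_prop)
      (measurable_composeFrom hK hKm (t + 1))
  · rw [funext (composeFrom_of_not_lt h)]
    exact Measure.measurable_dirac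
termination_by T - t

theorem measurable_composePair (hρ : ∀ t p, IsProbabilityMeasure (ρ t p))
    (hρm : ∀ t, Measurable (ρ t)) (t : ℕ) : Measurable (composePair ρ t) := by
  by_cases h : t < T
  · have : IsMarkovKernel (⟨ρ ⟨t, h⟩, hρm _⟩ : Kernel _ _) := ⟨hρ _⟩
    rw [funext (composePair_of_lt h)]
    exact Kernel.measurable_bind_uncurry ⟨ρ ⟨t, h⟩, hρm _⟩ (by fun_prop)
      (measurable_composePair hρ hρm (t + 1))
  · rw [funext (composePair_of_not_lt h)]
    exact Measure.measurable_dirac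
termination_by T - t

theorem map_fst_composePair (hK : ∀ t x, IsProbabilityMeasure (K t x))
    (hKm : ∀ t, Measurable (K t)) (hρ : ∀ t p, IsProbabilityMeasure (ρ t p))
    (hρm : ∀ t, Measurable (ρ t)) (hρ1 : ∀ t p, (ρ t p).map Prod.fst = K t p.1) (t : ℕ)
    (p : (∀ s, Ξ s) × (∀ s, Ξ s)) : (composePair ρ t p).map Prod.fst = composeFrom K t p.1 := by
  by_cases h : t < T
  · rw [composePair_of_lt h, composeFrom_of_lt h, ← hρ1]
    exact Measure.map_bind_eq_bind_map_of_map_eq _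
      ((measurable_composePair hρ hρm _).comp (by fun_prop))
      ((measurable_composeFrom hK hKm _).comp (by fun_prop)) measurable_fst measurable_fst
      fun uv => map_fst_composePair hK hKm hρ hρm hρ1 (t + 1) _
  · rw [composePair_of_not_lt h, composeFrom_of_not_lt h, Measure.map_dirac' measurable_fst]
termination_by T - t

theorem map_snd_composePair (hK : ∀ t x, IsProbabilityMeasure (K t x))
    (hKm : ∀ t, Measurable (K t)) (hρ : ∀ t p, IsProbabilityMeasure (ρ t p))
    (hρm : ∀ t, Measurable (ρ t)) (hρ2 : ∀ t p, (ρ t p).map Prod.snd = K t p.2) (t : ℕ)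
    (p : (∀ s, Ξ s) × (∀ s, Ξ s)) : (composePair ρ t p).map Prod.snd = composeFrom K t p.2 := by
  by_cases h : t < T
  · rw [composePair_of_lt h, composeFrom_of_lt h, ← hρ2]
    exact Measure.map_bind_eq_bind_map_of_map_eq _
      ((measurable_composePair hρ hρm _).comp (by fun_prop))
      ((measurable_composeFrom hK hKm _).comp (by fun_prop)) measurable_snd measurable_snd
      fun uv => map_snd_composePair hK hKm hρ hρm hρ2 (t + 1) _
  · rw [composePair_of_not_lt h, composeFrom_of_not_lt h, Measure.map_dirac' measurable_snd]
termination_by T - t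

end Composition

/-- If the stagewise kernels `ρ_t(·×·|x_{1:t-1},y_{1:t-1})` have marginals
`P_t(·|x_{1:t-1})` and `P̃_t(·|y_{1:t-1})`, then the conditional marginals of the
composed measure `π` satisfy `π(A×Ξ | x_{1:t}, y_{1:t}) = P(A | x_{1:t})` and
`π(Ξ×B | x_{1:t}, y_{1:t}) = P̃(B | y_{1:t})` for all `t ∈ {0,…,T-1}`. -/
theorem composePair_conditional_marginals {T : ℕ} {Ξ : Fin T → Type*}
    [∀ t, MeasurableSpace (Ξ t)]
    (K K' : ∀ t : Fin T, (∀ s, Ξ s) → Measure (Ξ t))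
    (hK : ∀ t x, IsProbabilityMeasure (K t x)) (hK' : ∀ t y, IsProbabilityMeasure (K' t y))
    (hKm : ∀ t, Measurable (K t)) (hK'm : ∀ t, Measurable (K' t))
    (ρ : ∀ t : Fin T, ((∀ s, Ξ s) × (∀ s, Ξ s)) → Measure (Ξ t × Ξ t))
    (hρm : ∀ t, Measurable (ρ t))
    (hρ1 : ∀ t p, (ρ t p).map Prod.fst = K t p.1)
    (hρ2 : ∀ t p, (ρ t p).map Prod.snd = K' t p.2) :
    ∀ t : ℕ, t < T → ∀ p : (∀ s, Ξ s) × (∀ s, Ξ s),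
      (composePair ρ t p).map Prod.fst = composeFrom K t p.1 ∧
      (composePair ρ t p).map Prod.snd = composeFrom K' t p.2 := by
  have hρ : ∀ t p, IsProbabilityMeasure (ρ t p) := fun t p =>
    have : IsProbabilityMeasure ((ρ t p).map Prod.fst) := hρ1 t p ▸ hK t p.1
    Measure.isProbabilityMeasure_of_map Prod.fst
  intro t _ p
  exact ⟨map_fst_composePair hK hKm hρ hρm hρ1 t p, map_snd_composePair hK' hK'm hρ hρm hρ2 t p⟩
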